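/- There is an absolute constant C > 0 such that the following holds. Let p be a prime, let I = [K+1, K+M] ⊆ [1, p-1] be an interval of M integers, let N be an integer with 1 ≤ N < p, let α_m (m ∈ I) be complex numbers, and let γ_x (1 ≤ x ≤ p-1) be complex numbers with |γ_x| ≤ min{N, p/‖x‖_p}. Then |∑_{m∈I} ∑_{x : 1 ≤ x ≤ p-1, ‖x‖_p ≤ p/N} α_m γ_x e_p(m x̄)| ≤ C ‖α‖₂ N^{1/2} p, where ‖α‖₂ = (∑_{m∈I} |α_m|²)^{1/2}. -/

import Mathlib

/-!
Put `S(m) = ∑_x γ_x e_p(m x̄)`. By Cauchy–Schwarz the double sum is at most `‖α‖₂` times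
`(∑_{m ∈ I} |S(m)|²)^{1/2}`. Extending the `m`-sum to all of `ℤ/p`, orthogonality of additive
characters and injectivity of `x ↦ x̄` give `∑_m |S(m)|² = p ∑_x |γ_x|²`. At most `2p/N` residues
`x` satisfy `N‖x‖_p ≤ p`, and each has `|γ_x| ≤ N`, so `∑_m |S(m)|² ≤ 2Np²` and `C = √2` works.
-/

/-- `e_p(z) = exp(2πiz/p)`. -/
noncomputable def ep (p : ℕ) (z : ℤ) : ℂ := Complex.exp (2 * Real.pi * Complex.I * z / p)

/-- the multiplicative inverse of `x` modulo `p`, as a natural number -/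
def pinv (p x : ℕ) : ℕ := ((x : ZMod p)⁻¹).val

/-- `‖u‖_p`: the distance from `u` to the nearest multiple of `p` -/
def dp (p : ℕ) (u : ℤ) : ℕ := min (u % p).toNat (p - (u % p).toNat)

open Finset ComplexConjugate

namespace AddChar

variable {R ι : Type*} [CommRing R] [Fintype R] {ψ : AddChar R ℂ}

theorem sum_norm_sq_sum_mul_apply_mul (hψ : ψ.IsPrimitive) (T : Finset ι) {u : ι → R}
    (hu : Set.InjOn u T) (c : ι → ℂ) :
    ∑ m, ‖∑ x ∈ T, c x * ψ (m * u x)‖ ^ 2 = Fintype.card R * ∑ x ∈ T, ‖c x‖ ^ 2 := by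
  classical
  have orth : ∀ x ∈ T, ∀ y ∈ T,
      ∑ m, ψ (m * (u x - u y)) = if x = y then (Fintype.card R : ℂ) else 0 := by
    intro x hx y hy
    rw [sum_mulShift _ hψ, sub_eq_zero, hu.eq_iff hx hy, Nat.cast_ite, Nat.cast_zero]
  suffices ((∑ m, ‖∑ x ∈ T, c x * ψ (m * u x)‖ ^ 2 : ℝ) : ℂ)
      = ((Fintype.card R * ∑ x ∈ T, ‖c x‖ ^ 2 : ℝ) : ℂ) from mod_cast this
  push_cast
  calc ∑ m, ((‖∑ x ∈ T, c x * ψ (m * u x)‖ : ℝ) : ℂ) ^ 2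
      = ∑ m, (∑ x ∈ T, c x * ψ (m * u x)) * conj (∑ y ∈ T, c y * ψ (m * u y)) := by
        simp_rw [Complex.mul_conj']
    _ = ∑ x ∈ T, ∑ y ∈ T, c x * conj (c y) * ∑ m, ψ (m * (u x - u y)) := by
        simp_rw [map_sum, map_mul, ← map_neg_eq_conj, sum_mul_sum, mul_sum]
        rw [sum_comm]
        refine sum_congr rfl fun x _ ↦ ?_
        rw [sum_comm]
        refine sum_congr rfl fun y _ ↦ sum_congr rfl fun m _ ↦ ?_
        rw [mul_sub, sub_eq_add_neg, map_add_eq_mul]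
        ring
    _ = ∑ x ∈ T, c x * conj (c x) * Fintype.card R := by
        refine sum_congr rfl fun x hx ↦ ?_
        rw [sum_eq_single_of_mem x hx fun y hy hne ↦ by rw [orth x hx y hy, if_neg hne.symm,
          mul_zero], orth x hx x hx, if_pos rfl]
    _ = Fintype.card R * ∑ x ∈ T, ((‖c x‖ : ℝ) : ℂ) ^ 2 := by
        simp_rw [mul_sum, Complex.mul_conj', mul_comm]

end AddChar

theorem sum_natCast_le_sum_zmod {n : ℕ} [NeZero n] {I : Finset ℕ} (hI : ∀ m ∈ I, m < n)
    {f : ZMod n → ℝ} (hf : ∀ y, 0 ≤ f y) : ∑ m ∈ I, f m ≤ ∑ y, f y := by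
  classical
  rw [← sum_image fun a ha b hb h ↦ by
    rw [← ZMod.val_cast_of_lt (hI a ha), h, ZMod.val_cast_of_lt (hI b hb)]]
  exact sum_le_univ_sum_of_nonneg hf

theorem norm_sum_mul_le_sqrt_mul_sqrt {ι 𝕜 : Type*} [SeminormedRing 𝕜] (s : Finset ι)
    (f g : ι → 𝕜) :
    ‖∑ i ∈ s, f i * g i‖ ≤ √(∑ i ∈ s, ‖f i‖ ^ 2) * √(∑ i ∈ s, ‖g i‖ ^ 2) :=
  calc ‖∑ i ∈ s, f i * g i‖ ≤ ∑ i ∈ s, ‖f i‖ * ‖g i‖ :=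
        (norm_sum_le _ _).trans (sum_le_sum fun _ _ ↦ norm_mul_le _ _)
    _ ≤ _ := Real.sum_mul_le_sqrt_mul_sqrt _ _ _

theorem ep_eq_stdAddChar (p : ℕ) [NeZero p] (z : ℤ) :
    ep p z = ZMod.stdAddChar (z : ZMod p) := by
  rw [ZMod.stdAddChar_coe, ep]

theorem ep_natCast_mul_pinv (p : ℕ) [NeZero p] (m x : ℕ) :
    ep p (m * pinv p x) = ZMod.stdAddChar ((m : ZMod p) * (x : ZMod p)⁻¹) := by
  rw [ep_eq_stdAddChar, pinv]
  push_cast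
  rw [ZMod.natCast_zmod_val]

theorem dp_natCast_of_lt {p x : ℕ} (h : x < p) : dp p x = min x (p - x) := by
  rw [dp, Int.emod_eq_of_lt (by positivity) (by exact_mod_cast h)]
  simp

theorem mul_card_le_of_dp_le {p N : ℕ} {T : Finset ℕ} (hT : T ⊆ Icc 1 (p - 1))
    (hTN : ∀ x ∈ T, N * dp p x ≤ p) : N * #T ≤ 2 * p := by
  rcases N.eq_zero_or_pos with rfl | hN
  · simp
  have hsub : T ⊆ Icc 1 (p / N) ∪ Ico (p - p / N) p := by
    intro x hx
    have hx' := mem_Icc.1 (hT hx)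
    have hmin : min x (p - x) ≤ p / N := by
      rw [Nat.le_div_iff_mul_le hN, mul_comm, ← dp_natCast_of_lt (by omega)]
      exact hTN x hx
    simp only [mem_union, mem_Icc, mem_Ico]
    omega
  calc N * #T ≤ N * (2 * (p / N)) := by
        gcongr
        refine (card_le_card hsub).trans ((card_union_le _ _).trans ?_)
        simp only [Nat.card_Icc, Nat.card_Ico]
        omega
    _ ≤ 2 * p := by
        rw [mul_left_comm]
        exact Nat.mul_le_mul_left 2 (Nat.mul_div_le p N)

theorem sum_norm_sq_sum_ep_le {p N : ℕ} (hp : p.Prime) {I T : Finset ℕ} (hI : ∀ m ∈ I, m < p)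
    (hT : T ⊆ Icc 1 (p - 1)) (hTN : ∀ x ∈ T, N * dp p x ≤ p) {γ : ℕ → ℂ}
    (hγ : ∀ x ∈ T, ‖γ x‖ ≤ N) :
    ∑ m ∈ I, ‖∑ x ∈ T, γ x * ep p (m * pinv p x)‖ ^ 2 ≤ 2 * N * p ^ 2 := by
  have : Fact p.Prime := ⟨hp⟩
  have hinj : Set.InjOn (fun x : ℕ ↦ (x : ZMod p)⁻¹) T := by
    intro a ha b hb h
    have ha' := mem_Icc.1 (hT ha)
    have hb' := mem_Icc.1 (hT hb)
    have := inv_injective h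
    rwa [ZMod.natCast_eq_natCast_iff', Nat.mod_eq_of_lt (by omega),
      Nat.mod_eq_of_lt (by omega)] at this
  calc ∑ m ∈ I, ‖∑ x ∈ T, γ x * ep p (m * pinv p x)‖ ^ 2
      ≤ ∑ m : ZMod p, ‖∑ x ∈ T, γ x * ZMod.stdAddChar (m * (x : ZMod p)⁻¹)‖ ^ 2 := by
        simp_rw [ep_natCast_mul_pinv]
        exact sum_natCast_le_sum_zmod (f := fun m : ZMod p ↦
          ‖∑ x ∈ T, γ x * ZMod.stdAddChar (m * (x : ZMod p)⁻¹)‖ ^ 2) hI fun _ ↦ by positivity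
    _ = p * ∑ x ∈ T, ‖γ x‖ ^ 2 := by
        rw [AddChar.sum_norm_sq_sum_mul_apply_mul (ZMod.isPrimitive_stdAddChar p) T hinj,
          ZMod.card]
    _ ≤ p * (#T * N ^ 2) := by
        gcongr
        simpa using sum_le_card_nsmul T _ _ fun x hx ↦
          pow_le_pow_left₀ (norm_nonneg _) (hγ x hx) 2
    _ = p * N * (N * #T) := by ring
    _ ≤ p * N * (2 * p) :=
        mul_le_mul_of_nonneg_left (mod_cast mul_card_le_of_dp_le hT hTN) (by positivity)
    _ = 2 * N * p ^ 2 := by ring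

theorem weighted_sum_small_dist_bound :
    ∃ C : ℝ, 0 < C ∧
      ∀ p K M N : ℕ, p.Prime → 1 ≤ M → K + M ≤ p - 1 → 1 ≤ N → N < p →
        ∀ α γ : ℕ → ℂ,
        (∀ x ∈ Finset.Icc 1 (p - 1), ‖γ x‖ ≤ min (N : ℝ) ((p : ℝ) / (dp p x : ℝ))) →
        ‖∑ m ∈ Finset.Icc (K + 1) (K + M),
            ∑ x ∈ (Finset.Icc 1 (p - 1)).filter (fun x : ℕ => (N * dp p x : ℝ) ≤ p),
              α m * γ x * ep p ((m : ℤ) * pinv p x)‖ ≤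
          C * Real.sqrt (∑ m ∈ Finset.Icc (K + 1) (K + M), ‖α m‖ ^ 2) *
            Real.sqrt N * p := by
  refine ⟨√2, by positivity, fun p K M N hp _ hKM _ _ α γ hγ ↦ ?_⟩
  set I := Icc (K + 1) (K + M)
  set T := (Icc 1 (p - 1)).filter fun x : ℕ ↦ (N * dp p x : ℝ) ≤ p
  have hT : T ⊆ Icc 1 (p - 1) := filter_subset _ _
  have energy := sum_norm_sq_sum_ep_le hp (I := I) (fun m hm ↦ by simp [I] at hm; omega) hT
    (fun x hx ↦ by exact_mod_cast (mem_filter.1 hx).2)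
    (fun x hx ↦ (hγ x (hT hx)).trans (min_le_left _ _))
  calc ‖∑ m ∈ I, ∑ x ∈ T, α m * γ x * ep p (m * pinv p x)‖
      = ‖∑ m ∈ I, α m * ∑ x ∈ T, γ x * ep p (m * pinv p x)‖ := by simp_rw [mul_sum, mul_assoc]
    _ ≤ √(∑ m ∈ I, ‖α m‖ ^ 2) * √(2 * N * p ^ 2) :=
        (norm_sum_mul_le_sqrt_mul_sqrt _ _ _).trans (by gcongr)
    _ = √2 * √(∑ m ∈ I, ‖α m‖ ^ 2) * √N * p := by
        rw [Real.sqrt_mul (by positivity), Real.sqrt_mul (by positivity),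
          Real.sqrt_sq (by positivity)]
        ring
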